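/- arXiv:2306.15504 — 4 statements merged into one kernel-verified Lean document; each statement's English description precedes it below -/
import Mathlib

section
/- Let μ > 0, r_0 > 0, R > 0 and define r_h := (16 μ r_0 R²)^{1/3}, assuming r_h < r_0. Then the function v : [0, r_0] → ℝ defined by v(r) = -(3/16) r³/R² + (2μ(r_0/r_h - 1) + r_h²/(16R²)) r for r ∈ [0, r_h] and v(r) = -2μ r - (r³ - r_h³)/(6R²) + 2μ r_0 log(r/r_h) for r ∈ [r_h, r_0] is continuously differentiable on (0, r_0), and satisfies v(r)/r ≥ -2μ for all r ∈ (0, r_h] and v(r)/r ≤ -2μ for all r ∈ [r_h, r_0]. -/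
/-!
Everything rests on `r_h³ = 16 μ r₀ R²`, i.e. `2 μ r₀ = r_h³ / (8 R²)`. With it the inner branch
becomes `-2μ r + 3 r (r_h² - r²) / (16 R²)`, so its quotient by `r` is at least `-2μ` up to `r_h`.
On the outer branch, `log t ≤ t - 1` bounds the logarithmic term by `r_h² (r - r_h) / (8 R²)`,
which is dominated by `(r³ - r_h³) / (6 R²)`. Both branches take the value `-2μ r_h` at `r_h` and
have the same slope there, and two `C¹` pieces that agree to first order glue to a `C¹` function.
-/

open Set

section Gluing

variable {f g : ℝ → ℝ} {a : ℝ}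

theorem ite_le_eq_right_of_le (hfg : f a = g a) {x : ℝ} (hx : a ≤ x) :
    (if x ≤ a then f x else g x) = g x := by
  split_ifs with h
  · rw [le_antisymm h hx, hfg]
  · rfl

theorem HasDerivAt.ite_le {f' : ℝ} (hf : HasDerivAt f f' a) (hg : HasDerivAt g f' a)
    (hfg : f a = g a) : HasDerivAt (fun x => if x ≤ a then f x else g x) f' a := by
  have hleft : HasDerivWithinAt (fun x => if x ≤ a then f x else g x) f' (Iic a) a :=
    hf.hasDerivWithinAt.congr (fun x hx => if_pos hx) (if_pos le_rfl)
  have hright : HasDerivWithinAt (fun x => if x ≤ a then f x else g x) f' (Ici a) a :=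
    hg.hasDerivWithinAt.congr (fun x hx => ite_le_eq_right_of_le hfg hx)
      (ite_le_eq_right_of_le hfg le_rfl)
  simpa only [Iic_union_Ici, hasDerivWithinAt_univ] using hleft.union hright

theorem ContDiffOn.ite_le {u : Set ℝ} (hu : IsOpen u) (hf : ContDiffOn ℝ 1 f u)
    (hg : ContDiffOn ℝ 1 g u) (hfg : f a = g a) (hfg' : deriv f a = deriv g a) :
    ContDiffOn ℝ 1 (fun x => if x ≤ a then f x else g x) u := by
  set w : ℝ → ℝ := fun x => if x ≤ a then deriv f x else deriv g x
  have hderiv : ∀ x ∈ u, HasDerivAt (fun x => if x ≤ a then f x else g x) (w x) x := by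
    intro x hx
    have hfx := ((hf.differentiableOn one_ne_zero x hx).differentiableAt (hu.mem_nhds hx)).hasDerivAt
    have hgx := ((hg.differentiableOn one_ne_zero x hx).differentiableAt (hu.mem_nhds hx)).hasDerivAt
    rcases lt_trichotomy x a with hxa | rfl | hxa
    · rw [show w x = deriv f x from if_pos hxa.le]
      exact hfx.congr_of_eventuallyEq
        ((eventually_lt_nhds hxa).mono fun y hy => if_pos hy.le)
    · rw [show w x = deriv f x from if_pos le_rfl]
      exact hfx.ite_le (hfg' ▸ hgx) hfg
    · rw [show w x = deriv g x from if_neg hxa.not_ge]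
      exact hgx.congr_of_eventuallyEq
        ((eventually_gt_nhds hxa).mono fun y hy => if_neg hy.not_ge)
  have hw : ContinuousOn w u := by
    refine ContinuousOn.if ?_ ((hf.continuousOn_deriv_of_isOpen hu le_rfl).mono inter_subset_left)
      ((hg.continuousOn_deriv_of_isOpen hu le_rfl).mono inter_subset_left)
    rintro x ⟨-, hx⟩
    rw [show {x : ℝ | x ≤ a} = Iic a from rfl, frontier_Iic, mem_singleton_iff] at hx
    rwa [hx]
  rw [show (1 : WithTop ℕ∞) = 0 + 1 from rfl, contDiffOn_succ_iff_deriv_of_isOpen hu]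
  refine ⟨fun x hx => (hderiv x hx).differentiableAt.differentiableWithinAt, by simp, ?_⟩
  rw [contDiffOn_zero]
  exact hw.congr fun x hx => (hderiv x hx).deriv

end Gluing

section Branches

variable (μ r0 R rh : ℝ)

noncomputable def innerBranch (r : ℝ) : ℝ :=
  -(3/16) * r ^ 3 / R ^ 2 + (2 * μ * (r0 / rh - 1) + rh ^ 2 / (16 * R ^ 2)) * r

noncomputable def outerBranch (r : ℝ) : ℝ :=
  -2 * μ * r - (r ^ 3 - rh ^ 3) / (6 * R ^ 2) + 2 * μ * r0 * Real.log (r / rh)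

variable {μ r0 R rh}

theorem innerBranch_eq (hR : R ≠ 0) (hrh : rh ≠ 0) (hcube : rh ^ 3 = 16 * μ * r0 * R ^ 2)
    (r : ℝ) :
    innerBranch μ r0 R rh r = -2 * μ * r + 3 * r * (rh ^ 2 - r ^ 2) / (16 * R ^ 2) := by
  unfold innerBranch
  field_simp
  linear_combination (-2 * r) * hcube

theorem innerBranch_self (hR : R ≠ 0) (hrh : rh ≠ 0) (hcube : rh ^ 3 = 16 * μ * r0 * R ^ 2) :
    innerBranch μ r0 R rh rh = -2 * μ * rh := by
  simp [innerBranch_eq hR hrh hcube]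

theorem outerBranch_self (hrh : rh ≠ 0) : outerBranch μ r0 R rh rh = -2 * μ * rh := by
  simp [outerBranch, div_self hrh]

theorem neg_two_mul_le_innerBranch_div (hR : R ≠ 0) (hcube : rh ^ 3 = 16 * μ * r0 * R ^ 2)
    {r : ℝ} (hr : r ∈ Ioc 0 rh) : -2 * μ ≤ innerBranch μ r0 R rh r / r := by
  obtain ⟨hr0, hrrh⟩ := hr
  rw [innerBranch_eq hR (hr0.trans_le hrrh).ne' hcube, le_div_iff₀ hr0]
  have : 0 ≤ 3 * r * (rh ^ 2 - r ^ 2) / (16 * R ^ 2) := by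
    have : 0 ≤ rh ^ 2 - r ^ 2 := sub_nonneg.mpr (pow_le_pow_left₀ hr0.le hrrh 2)
    positivity
  linarith

theorem outerBranch_div_le_neg_two_mul (hR : R ≠ 0) (hrh : 0 < rh)
    (hcube : rh ^ 3 = 16 * μ * r0 * R ^ 2) {r : ℝ} (hr : rh ≤ r) :
    outerBranch μ r0 R rh r / r ≤ -2 * μ := by
  have hr0 : 0 < r := hrh.trans_le hr
  have h2μr0 : 2 * μ * r0 = rh ^ 3 / (8 * R ^ 2) := by field_simp; linear_combination -hcube
  have hlog : 2 * μ * r0 * Real.log (r / rh) ≤ rh ^ 2 * (r - rh) / (8 * R ^ 2) :=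
    calc 2 * μ * r0 * Real.log (r / rh) ≤ 2 * μ * r0 * (r / rh - 1) :=
          mul_le_mul_of_nonneg_left (Real.log_le_sub_one_of_pos (div_pos hr0 hrh))
            (by rw [h2μr0]; positivity)
      _ = rh ^ 2 * (r - rh) / (8 * R ^ 2) := by rw [h2μr0]; field_simp
  have hcubes : rh ^ 2 * (r - rh) / (8 * R ^ 2) ≤ (r ^ 3 - rh ^ 3) / (6 * R ^ 2) := by
    rw [div_le_div_iff₀ (by positivity) (by positivity)]
    have : 0 ≤ r - rh := sub_nonneg.mpr hr
    nlinarith [show 0 ≤ R ^ 2 * (r - rh) * (2 * r + rh) ^ 2 by positivity]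
  rw [div_le_iff₀ hr0, outerBranch]
  linarith

theorem hasDerivAt_innerBranch (r : ℝ) :
    HasDerivAt (innerBranch μ r0 R rh)
      (-(9/16) * r ^ 2 / R ^ 2 + (2 * μ * (r0 / rh - 1) + rh ^ 2 / (16 * R ^ 2))) r := by
  have := (((hasDerivAt_pow 3 r).const_mul (-(3/16))).div_const (R ^ 2)).add
    ((hasDerivAt_id r).const_mul (2 * μ * (r0 / rh - 1) + rh ^ 2 / (16 * R ^ 2)))
  unfold innerBranch
  exact this.congr_deriv (by ring)

theorem hasDerivAt_outerBranch (hrh : rh ≠ 0) {r : ℝ} (hr : r ≠ 0) :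
    HasDerivAt (outerBranch μ r0 R rh) (-2 * μ - r ^ 2 / (2 * R ^ 2) + 2 * μ * r0 / r) r := by
  have hlog := ((hasDerivAt_id r).div_const rh).log (div_ne_zero hr hrh)
  have := ((((hasDerivAt_id r).const_mul (-2 * μ)).sub
    (((hasDerivAt_pow 3 r).sub_const (rh ^ 3)).div_const (6 * R ^ 2))).add
    (hlog.const_mul (2 * μ * r0)))
  unfold outerBranch
  exact this.congr_deriv (by simp only [id]; field_simp; ring)

theorem deriv_innerBranch_self_eq (hR : R ≠ 0) (hrh : rh ≠ 0) :
    deriv (innerBranch μ r0 R rh) rh = deriv (outerBranch μ r0 R rh) rh := by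
  rw [(hasDerivAt_innerBranch rh).deriv, (hasDerivAt_outerBranch hrh hrh).deriv]
  field_simp
  ring

theorem contDiff_innerBranch {n : WithTop ℕ∞} : ContDiff ℝ n (innerBranch μ r0 R rh) := by
  unfold innerBranch; fun_prop

theorem contDiffOn_outerBranch (hrh : rh ≠ 0) {n : WithTop ℕ∞} :
    ContDiffOn ℝ n (outerBranch μ r0 R rh) (Ioi 0) := by
  unfold outerBranch
  have : ContDiffOn ℝ n (fun r => Real.log (r / rh)) (Ioi 0) :=
    (contDiffOn_id.div_const rh).log fun r hr => div_ne_zero (ne_of_gt hr) hrh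
  fun_prop

end Branches

theorem explicit_minimizer_properties_general (μ r0 R : ℝ) (hμ : 0 < μ) (hr0 : 0 < r0) (hR : 0 < R)
    (rh : ℝ) (hrh : rh = (16 * μ * r0 * R ^ 2) ^ ((1:ℝ)/3))
    (v : ℝ → ℝ)
    (hv : ∀ r : ℝ, v r =
      if r ≤ rh then
        -(3/16) * r ^ 3 / R ^ 2 + (2 * μ * (r0 / rh - 1) + rh ^ 2 / (16 * R ^ 2)) * r
      else
        -2 * μ * r - (r ^ 3 - rh ^ 3) / (6 * R ^ 2) + 2 * μ * r0 * Real.log (r / rh)) :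
    ContDiffOn ℝ 1 v (Set.Ioo 0 r0) ∧
      (∀ r ∈ Set.Ioc (0:ℝ) rh, -2 * μ ≤ v r / r) ∧
      (∀ r ∈ Set.Icc rh r0, v r / r ≤ -2 * μ) := by
  have hrh0 : 0 < rh := hrh ▸ by positivity
  have hcube : rh ^ 3 = 16 * μ * r0 * R ^ 2 := by
    rw [hrh, one_div]
    exact_mod_cast Real.rpow_inv_natCast_pow (n := 3) (by positivity) three_ne_zero
  have hmatch : innerBranch μ r0 R rh rh = outerBranch μ r0 R rh rh := by
    rw [innerBranch_self hR.ne' hrh0.ne' hcube, outerBranch_self hrh0.ne']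
  obtain rfl : v = fun r => if r ≤ rh then innerBranch μ r0 R rh r
      else outerBranch μ r0 R rh r := funext hv
  refine ⟨?_, fun r hr => ?_, fun r hr => ?_⟩
  · exact contDiff_innerBranch.contDiffOn.ite_le isOpen_Ioo
      ((contDiffOn_outerBranch hrh0.ne').mono Ioo_subset_Ioi_self) hmatch
      (deriv_innerBranch_self_eq hR.ne' hrh0.ne')
  · simpa only [if_pos hr.2] using neg_two_mul_le_innerBranch_div hR.ne' hcube hr
  · simpa only [ite_le_eq_right_of_le hmatch hr.1] using
      outerBranch_div_le_neg_two_mul hR.ne' hrh0 hcube hr.1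

/-- the explicit minimizer `v = v_h^0` of the effective functional is
`C¹` on `(0, r₀)`, with `v(r)/r ≥ -2μ` on `(0, r_h]` and `v(r)/r ≤ -2μ` on `[r_h, r₀]`. -/
theorem explicit_minimizer_properties (μ r0 R : ℝ) (hμ : 0 < μ) (hr0 : 0 < r0) (hR : 0 < R)
    (rh : ℝ) (hrh : rh = (16 * μ * r0 * R ^ 2) ^ ((1:ℝ)/3)) (hlt : rh < r0)
    (v : ℝ → ℝ)
    (hv : ∀ r : ℝ, v r =
      if r ≤ rh then
        -(3/16) * r ^ 3 / R ^ 2 + (2 * μ * (r0 / rh - 1) + rh ^ 2 / (16 * R ^ 2)) * r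
      else
        -2 * μ * r - (r ^ 3 - rh ^ 3) / (6 * R ^ 2) + 2 * μ * r0 * Real.log (r / rh)) :
    ContDiffOn ℝ 1 v (Set.Ioo 0 r0) ∧
      (∀ r ∈ Set.Ioc (0:ℝ) rh, -2 * μ ≤ v r / r) ∧
      (∀ r ∈ Set.Icc rh r0, v r / r ≤ -2 * μ) :=
  explicit_minimizer_properties_general μ r0 R hμ hr0 hR rh hrh v hv
end

section
/- Let μ, r_0, R > 0 with r_h := (16μ r_0 R²)^{1/3} < r_0 and let v be the explicit minimizer as above with σ(r) = v'(r) + r²/(2R²). Then v satisfies the Euler–Lagrange equation (2 σ(r) r)' = W_rel'(v(r)/r) for all r ∈ (0, r_0) \ {r_h}, where W_rel'(η) = 2η if η ≥ -2μ and W_rel'(η) = -4μ if η ≤ -2μ. -/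
/-!
On the elastic core `r < r_h` the minimizer is a cubic, so `2σ(r)r` is a cubic whose derivative
equals `2v(r)/r`; there `v(r)/r + 2μ = 3(r_h² - r²)/(16R²) ≥ 0`. On the plastic annulus `r > r_h`
one has `2σ(r)r = 4μ(r₀ - r)`, with derivative `-4μ`, and `log x ≤ x - 1` gives `v(r)/r ≤ -2μ`.
Both computations use `r_h³ = 16μr₀R²`, i.e. `2μr₀ = r_h³/(8R²)`.
-/

open Set Filter Topology

theorem deriv_flux_eq_of_eqOn {R r F' : ℝ} {U : Set ℝ} {v g g' F : ℝ → ℝ}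
    (hU : IsOpen U) (hr : r ∈ U) (hvg : EqOn v g U) (hg : ∀ s ∈ U, HasDerivAt g (g' s) s)
    (hflux : ∀ s ∈ U, 2 * (g' s + s ^ 2 / (2 * R ^ 2)) * s = F s) (hF : HasDerivAt F F' r) :
    deriv (fun s : ℝ => 2 * (deriv v s + s ^ 2 / (2 * R ^ 2)) * s) r = F' := by
  refine (hF.congr_of_eventuallyEq ?_).deriv
  filter_upwards [hU.mem_nhds hr] with s hs
  rw [((hg s hs).congr_of_eventuallyEq (hvg.eventuallyEq_of_mem (hU.mem_nhds hs))).deriv,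
    hflux s hs]

section Minimizer

variable {μ r0 R rh : ℝ}

noncomputable def elasticSlope (μ r0 R rh : ℝ) : ℝ := 2 * μ * (r0 / rh - 1) + rh ^ 2 / (16 * R ^ 2)

noncomputable def elasticBranch (R c r : ℝ) : ℝ := -(3/16) * r ^ 3 / R ^ 2 + c * r

noncomputable def plasticBranch (μ r0 R rh r : ℝ) : ℝ :=
  -2 * μ * r - (r ^ 3 - rh ^ 3) / (6 * R ^ 2) + 2 * μ * r0 * Real.log (r / rh)

theorem two_mul_mu_mul_r0_eq (h3 : 16 * μ * r0 * R ^ 2 = rh ^ 3) (hR : R ≠ 0) :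
    2 * μ * r0 = rh ^ 3 / (8 * R ^ 2) := by
  field_simp
  linear_combination h3

theorem elasticSlope_eq (h3 : 16 * μ * r0 * R ^ 2 = rh ^ 3) (hR : R ≠ 0) :
    elasticSlope μ r0 R rh = 3 * rh ^ 2 / (16 * R ^ 2) - 2 * μ := by
  have h := two_mul_mu_mul_r0_eq h3 hR
  rw [elasticSlope, mul_sub, mul_one, ← mul_div_assoc, h]
  field_simp
  ring

theorem hasDerivAt_elasticBranch (R c s : ℝ) :
    HasDerivAt (elasticBranch R c) (-(9/16) * s ^ 2 / R ^ 2 + c) s := by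
  refine ((((hasDerivAt_pow 3 s).const_mul (-(3/16) : ℝ)).div_const (R ^ 2)).add
    ((hasDerivAt_id s).const_mul c)).congr_deriv ?_
  norm_num
  ring

theorem elasticBranch_div (R c : ℝ) {r : ℝ} (hr : r ≠ 0) :
    elasticBranch R c r / r = -(3/16) * r ^ 2 / R ^ 2 + c := by
  rw [elasticBranch]
  field_simp

theorem neg_two_mul_le_elasticBranch_div (h3 : 16 * μ * r0 * R ^ 2 = rh ^ 3) (hR : R ≠ 0)
    {r : ℝ} (hr : 0 < r) (hrh : r < rh) :
    -2 * μ ≤ elasticBranch R (elasticSlope μ r0 R rh) r / r := by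
  rw [elasticBranch_div R _ hr.ne', elasticSlope_eq h3 hR]
  have hsq : r ^ 2 ≤ rh ^ 2 := pow_le_pow_left₀ hr.le hrh.le 2
  have : 0 ≤ 3 * (rh ^ 2 - r ^ 2) / (16 * R ^ 2) := div_nonneg (by linarith) (by positivity)
  calc -2 * μ ≤ -2 * μ + 3 * (rh ^ 2 - r ^ 2) / (16 * R ^ 2) := le_add_of_nonneg_right this
    _ = _ := by field_simp; ring

theorem hasDerivAt_plasticBranch (hrh : rh ≠ 0) {s : ℝ} (hs : s ≠ 0) :
    HasDerivAt (plasticBranch μ r0 R rh) (-2 * μ - s ^ 2 / (2 * R ^ 2) + 2 * μ * r0 / s) s := by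
  refine ((((hasDerivAt_id s).const_mul (-2 * μ)).sub
    (((hasDerivAt_pow 3 s).sub_const (rh ^ 3)).div_const (6 * R ^ 2))).add
    ((((hasDerivAt_id s).div_const rh).log (div_ne_zero hs hrh)).const_mul
      (2 * μ * r0))).congr_deriv ?_
  simp only [id]
  field_simp
  ring

/-- `log x ≤ x - 1` reduces this to `r_h²(r - r_h)/8 ≤ (r³ - r_h³)/6`, whose two sides differ by
`(r - r_h)(2r + r_h)²/24`. -/
theorem plasticBranch_le (h3 : 16 * μ * r0 * R ^ 2 = rh ^ 3) (hR : R ≠ 0) (hrh : 0 < rh)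
    {r : ℝ} (hr : rh < r) : plasticBranch μ r0 R rh r ≤ -2 * μ * r := by
  have hμr0 := two_mul_mu_mul_r0_eq h3 hR
  have hR2 : 0 < R ^ 2 := by positivity
  have hlog : Real.log (r / rh) ≤ r / rh - 1 :=
    Real.log_le_sub_one_of_pos (div_pos (hrh.trans hr) hrh)
  have hcoef : 0 ≤ 2 * μ * r0 := by
    rw [hμr0]; exact div_nonneg (pow_nonneg hrh.le 3) (by positivity)
  have hcubic : rh ^ 2 * (r - rh) / (8 * R ^ 2) ≤ (r ^ 3 - rh ^ 3) / (6 * R ^ 2) := by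
    rw [div_le_div_iff₀ (by positivity) (by positivity)]
    nlinarith [mul_nonneg (mul_nonneg (sub_nonneg.2 hr.le) (sq_nonneg (2 * r + rh))) hR2.le]
  have hlin : 2 * μ * r0 * (r / rh - 1) = rh ^ 2 * (r - rh) / (8 * R ^ 2) := by
    rw [hμr0]
    field_simp
  rw [plasticBranch]
  linarith [mul_le_mul_of_nonneg_left hlog hcoef]

end Minimizer

theorem explicit_minimizer_EulerLagrange_general (μ r0 R : ℝ) (hμ : 0 < μ) (hr0 : 0 < r0) (hR : 0 < R)
    (rh : ℝ) (hrh : rh = (16 * μ * r0 * R ^ 2) ^ ((1:ℝ)/3))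
    (v : ℝ → ℝ)
    (hv : ∀ r : ℝ, v r =
      if r ≤ rh then
        -(3/16) * r ^ 3 / R ^ 2 + (2 * μ * (r0 / rh - 1) + rh ^ 2 / (16 * R ^ 2)) * r
      else
        -2 * μ * r - (r ^ 3 - rh ^ 3) / (6 * R ^ 2) + 2 * μ * r0 * Real.log (r / rh))
    (Wrel' : ℝ → ℝ)
    (hW' : ∀ η : ℝ, Wrel' η = if -2 * μ ≤ η then 2 * η else -4 * μ) :
    ∀ r ∈ Set.Ioo (0:ℝ) r0, r ≠ rh →
      deriv (fun s : ℝ => 2 * (deriv v s + s ^ 2 / (2 * R ^ 2)) * s) r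
        = Wrel' (v r / r) := by
  rintro r ⟨hr, -⟩ hne
  have hrh0 : 0 < rh := hrh ▸ by positivity
  have h3 : 16 * μ * r0 * R ^ 2 = rh ^ 3 := by
    rw [hrh, one_div]
    exact_mod_cast (Real.rpow_inv_natCast_pow (by positivity) three_ne_zero).symm
  rcases hne.lt_or_gt with hcore | hannulus
  · have hvg : EqOn v (elasticBranch R (elasticSlope μ r0 R rh)) (Iio rh) :=
      fun s hs => by rw [hv, if_pos hs.le]; rfl
    rw [deriv_flux_eq_of_eqOn isOpen_Iio hcore hvg (fun s _ => hasDerivAt_elasticBranch _ _ s)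
        (F := fun s => 2 * elasticSlope μ r0 R rh * s - s ^ 3 / (8 * R ^ 2))
        (fun s _ => by field_simp; ring)
        (((hasDerivAt_id r).const_mul _).sub ((hasDerivAt_pow 3 r).div_const _)),
      hW', if_pos (hvg hcore ▸ neg_two_mul_le_elasticBranch_div h3 hR.ne' hr hcore), hvg hcore,
      elasticBranch_div R _ hr.ne']
    ring
  · have hvg : EqOn v (plasticBranch μ r0 R rh) (Ioi rh) :=
      fun s hs => by rw [hv, if_neg (not_le.2 hs)]; rfl
    have hle : v r / r ≤ -2 * μ := by
      rw [div_le_iff₀ hr, hvg hannulus]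
      exact plasticBranch_le h3 hR.ne' hrh0 hannulus
    rw [deriv_flux_eq_of_eqOn isOpen_Ioi hannulus hvg
        (fun s hs => hasDerivAt_plasticBranch hrh0.ne' (hrh0.trans hs).ne')
        (F := fun s => 4 * μ * (r0 - s))
        (fun s hs => by have := (hrh0.trans hs).ne'; field_simp; ring)
        (((hasDerivAt_id r).const_sub r0).const_mul (4 * μ)), hW']
    split_ifs with hge
    · linarith [le_antisymm hle hge]
    · ring

/-- the explicit minimizer satisfies the Euler–Lagrange equation
`(2σ(r)r)' = W_rel'(v(r)/r)` on `(0, r₀) \ {r_h}`. -/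
theorem explicit_minimizer_EulerLagrange (μ r0 R : ℝ) (hμ : 0 < μ) (hr0 : 0 < r0) (hR : 0 < R)
    (rh : ℝ) (hrh : rh = (16 * μ * r0 * R ^ 2) ^ ((1:ℝ)/3)) (hlt : rh < r0)
    (v : ℝ → ℝ)
    (hv : ∀ r : ℝ, v r =
      if r ≤ rh then
        -(3/16) * r ^ 3 / R ^ 2 + (2 * μ * (r0 / rh - 1) + rh ^ 2 / (16 * R ^ 2)) * r
      else
        -2 * μ * r - (r ^ 3 - rh ^ 3) / (6 * R ^ 2) + 2 * μ * r0 * Real.log (r / rh))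
    (Wrel' : ℝ → ℝ)
    (hW' : ∀ η : ℝ, Wrel' η = if -2 * μ ≤ η then 2 * η else -4 * μ) :
    ∀ r ∈ Set.Ioo (0:ℝ) r0, r ≠ rh →
      deriv (fun s : ℝ => 2 * (deriv v s + s ^ 2 / (2 * R ^ 2)) * s) r
        = Wrel' (v r / r) :=
  explicit_minimizer_EulerLagrange_general μ r0 R hμ hr0 hR rh hrh v hv Wrel' hW'
end

section
/- Let w ∈ W^{2,2}((0, r_0)) with r_0 > 0. Then there is a constant C depending only on r_0 such that ∫₀^{r_0} |w'|² r dr ≤ C (∫₀^{r_0} |w|² r dr)^{1/2} (∫₀^{r_0} |w''|² r dr)^{1/2} + (C/r_0²) ∫₀^{r_0} |w|² r dr. -/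
/-!
On a window `[a, a + ℓ]` the fundamental theorem of calculus and Cauchy–Schwarz give
`ℓ² w'(t)² ≤ 3 w(a)² + 3 w(a + ℓ)² + 3 ℓ³ ∫ₐ^{a+ℓ} w''²` for every `t` in the window. Attach to
each `t ∈ [0, r₀]` a window of length `ℓ` inside `[0, r₀]` whose left end carries a weight
comparable to `t`: `[t, t + ℓ]` away from `r₀` and `[t - ℓ, t]` near `r₀`. Multiplying by `t` and
integrating gives `∫ w'² r ≤ 18 ℓ⁻² ∫ w² r + 12 ℓ² ∫ w''² r` for all `0 < ℓ ≤ r₀ / 3`, and the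
choice `ℓ⁴ = ∫ w² r / ∫ w''² r` (or `ℓ = r₀ / 3` when this is too large) gives the claim.
-/

open MeasureTheory intervalIntegral Set Filter Topology

theorem sq_integral_mul_le_integral_sq_mul_integral_sq {f g : ℝ → ℝ} (hf : Continuous f)
    (hg : Continuous g) {a b : ℝ} (hab : a ≤ b) :
    (∫ x in a..b, f x * g x) ^ 2 ≤ (∫ x in a..b, f x ^ 2) * ∫ x in a..b, g x ^ 2 := by
  have hquad : ∀ τ : ℝ, 0 ≤ (∫ x in a..b, g x ^ 2) * (τ * τ)
      + 2 * (∫ x in a..b, f x * g x) * τ + ∫ x in a..b, f x ^ 2 := by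
    intro τ
    have hexpand : ∫ x in a..b, (τ * g x + f x) ^ 2 = (∫ x in a..b, g x ^ 2) * (τ * τ)
        + 2 * (∫ x in a..b, f x * g x) * τ + ∫ x in a..b, f x ^ 2 := by
      have hsq (x : ℝ) :
          (τ * g x + f x) ^ 2 = τ ^ 2 * g x ^ 2 + 2 * τ * (f x * g x) + f x ^ 2 := by
        ring
      simp_rw [hsq]
      rw [intervalIntegral.integral_add, intervalIntegral.integral_add,
        intervalIntegral.integral_const_mul, intervalIntegral.integral_const_mul]
      · ring
      all_goals exact Continuous.intervalIntegrable (by fun_prop) _ _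
    rw [← hexpand]
    exact integral_nonneg hab fun x _ => sq_nonneg _
  have := discrim_le_zero hquad
  rw [discrim] at this
  linarith

theorem continuous_integral_window {q : ℝ → ℝ} (hq : Continuous q) (α β : ℝ) :
    Continuous fun t => ∫ s in t + α..t + β, q s := by
  simp_rw [add_comm _ α, add_comm _ β, ← integral_comp_add_right]
  fun_prop

theorem abs_sub_le_integral_abs_deriv {f : ℝ → ℝ} (hf : ContDiff ℝ 1 f) {a b s t : ℝ}
    (hs : s ∈ Icc a b) (ht : t ∈ Icc a b) : |f t - f s| ≤ ∫ u in a..b, |deriv f u| := by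
  wlog hst : s ≤ t generalizing s t
  · rw [abs_sub_comm]; exact this ht hs (le_of_not_ge hst)
  have hf' := hf.continuous_deriv le_rfl
  rw [← integral_deriv_eq_sub (fun x _ => hf.differentiable one_ne_zero x)
    (hf'.intervalIntegrable _ _)]
  calc |∫ u in s..t, deriv f u| ≤ ∫ u in s..t, |deriv f u| := abs_integral_le_integral_abs hst
    _ ≤ ∫ u in a..b, |deriv f u| :=
      integral_mono_interval hs.1 hst ht.2 (Eventually.of_forall fun _ => abs_nonneg _)
        (hf'.abs.intervalIntegrable _ _)

theorem abs_mul_deriv_sub_sub_le {f : ℝ → ℝ} (hf : ContDiff ℝ 2 f) {a b t : ℝ}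
    (ht : t ∈ Icc a b) :
    |(b - a) * deriv f t - (f b - f a)| ≤ (b - a) * ∫ u in a..b, |deriv (deriv f) u| := by
  have hf' : ContDiff ℝ 1 (deriv f) := hf.deriv'
  have hab : a ≤ b := ht.1.trans ht.2
  have hrepr : (b - a) * deriv f t - (f b - f a) = ∫ s in a..b, (deriv f t - deriv f s) := by
    rw [intervalIntegral.integral_sub intervalIntegrable_const
      (hf'.continuous.intervalIntegrable _ _),
      integral_deriv_eq_sub (fun x _ => hf.differentiable two_ne_zero x)
        (hf'.continuous.intervalIntegrable _ _), intervalIntegral.integral_const, smul_eq_mul]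
  rw [hrepr, mul_comm, ← abs_of_nonneg (sub_nonneg.2 hab)]
  refine intervalIntegral.norm_integral_le_of_norm_le_const (f := fun s => deriv f t - deriv f s)
    fun s hs => ?_
  rw [uIoc_of_le hab] at hs
  exact abs_sub_le_integral_abs_deriv hf' (Ioc_subset_Icc_self hs) ht

theorem sq_mul_deriv_le {f : ℝ → ℝ} (hf : ContDiff ℝ 2 f) {a b t : ℝ} (ht : t ∈ Icc a b) :
    ((b - a) * deriv f t) ^ 2
      ≤ 3 * f a ^ 2 + 3 * f b ^ 2
        + 3 * (b - a) ^ 3 * ∫ u in a..b, deriv (deriv f) u ^ 2 := by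
  have hab : 0 ≤ b - a := sub_nonneg.2 (ht.1.trans ht.2)
  have hf'' : Continuous (deriv (deriv f)) := hf.deriv'.continuous_deriv le_rfl
  set M := ∫ u in a..b, |deriv (deriv f) u|
  have hM : M ^ 2 ≤ (b - a) * ∫ u in a..b, deriv (deriv f) u ^ 2 := by
    simpa [sq_abs, mul_comm] using
      sq_integral_mul_le_integral_sq_mul_integral_sq hf''.abs (continuous_const (y := 1))
        (ht.1.trans ht.2)
  have hmvt : |(b - a) * deriv f t| ≤ |f a| + |f b| + (b - a) * M := by
    have := abs_mul_deriv_sub_sub_le hf ht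
    have := abs_sub (f b) (f a)
    have := abs_sub_abs_le_abs_sub ((b - a) * deriv f t) (f b - f a)
    linarith
  calc ((b - a) * deriv f t) ^ 2 ≤ (|f a| + |f b| + (b - a) * M) ^ 2 := by
        rw [← sq_abs]; exact pow_le_pow_left₀ (abs_nonneg _) hmvt 2
    _ ≤ 3 * f a ^ 2 + 3 * f b ^ 2 + 3 * (b - a) ^ 2 * M ^ 2 := by
        nlinarith [sq_abs (f a), sq_abs (f b), sq_nonneg (|f a| - |f b|),
          sq_nonneg (|f a| - (b - a) * M), sq_nonneg (|f b| - (b - a) * M)]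
    _ ≤ _ := by nlinarith [mul_le_mul_of_nonneg_left hM (by positivity : 0 ≤ 3 * (b - a) ^ 2)]

theorem sq_mul_weighted_sq_deriv_le {f : ℝ → ℝ} (hf : ContDiff ℝ 2 f) {a ℓ c t : ℝ}
    (hc : 0 ≤ c) (ha : 0 ≤ a) (ht : t ∈ Icc a (a + ℓ)) (htc : t ≤ c * a) :
    ℓ ^ 2 * (deriv f t ^ 2 * t)
      ≤ 3 * c * (f a ^ 2 * a) + 3 * (f (a + ℓ) ^ 2 * (a + ℓ))
        + 3 * c * ℓ ^ 3 * ∫ s in a..a + ℓ, deriv (deriv f) s ^ 2 * s := by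
  have hℓ : 0 ≤ ℓ := by linarith [ht.1, ht.2]
  have ht0 : 0 ≤ t := ha.trans ht.1
  have hf'' : Continuous (deriv (deriv f)) := hf.deriv'.continuous_deriv le_rfl
  have hunweighted := sq_mul_deriv_le hf ht
  rw [add_sub_cancel_left] at hunweighted
  have hweight : t * ∫ s in a..a + ℓ, deriv (deriv f) s ^ 2
      ≤ c * ∫ s in a..a + ℓ, deriv (deriv f) s ^ 2 * s := by
    rw [← intervalIntegral.integral_const_mul, ← intervalIntegral.integral_const_mul]
    refine integral_mono_on (by linarith) (Continuous.intervalIntegrable (by fun_prop) _ _)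
      (Continuous.intervalIntegrable (by fun_prop) _ _) fun s hs => ?_
    nlinarith [sq_nonneg (deriv (deriv f) s), hs.1, mul_le_mul_of_nonneg_left hs.1 hc]
  have hfa : f a ^ 2 * t ≤ c * (f a ^ 2 * a) := by nlinarith [sq_nonneg (f a)]
  have hfb : f (a + ℓ) ^ 2 * t ≤ f (a + ℓ) ^ 2 * (a + ℓ) :=
    mul_le_mul_of_nonneg_left ht.2 (sq_nonneg _)
  nlinarith [mul_le_mul_of_nonneg_right hunweighted ht0,
    mul_le_mul_of_nonneg_left hweight (by positivity : 0 ≤ 3 * ℓ ^ 3)]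

section NonnegOnIcc

variable {q : ℝ → ℝ} {R : ℝ}

theorem integral_le_integral_of_subinterval (hq : Continuous q) (hq0 : ∀ s ∈ Icc 0 R, 0 ≤ q s)
    {a b : ℝ} (ha : 0 ≤ a) (hab : a ≤ b) (hb : b ≤ R) :
    ∫ s in a..b, q s ≤ ∫ s in 0..R, q s :=
  integral_mono_interval ha hab hb
    ((ae_restrict_iff' measurableSet_Ioc).2
      (Eventually.of_forall fun s hs => hq0 s (Ioc_subset_Icc_self hs)))
    (hq.intervalIntegrable _ _)

theorem integral_comp_add_right_le (hq : Continuous q) (hq0 : ∀ s ∈ Icc 0 R, 0 ≤ q s)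
    {x y δ : ℝ} (hx : 0 ≤ x + δ) (hxy : x ≤ y) (hy : y + δ ≤ R) :
    ∫ t in x..y, q (t + δ) ≤ ∫ s in 0..R, q s := by
  rw [intervalIntegral.integral_comp_add_right]
  exact integral_le_integral_of_subinterval hq hq0 hx (by linarith) hy

/-- Fubini in disguise: each `s` lies in the windows `[t + α, t + β]` of a set of `t` of length
at most `β - α`. -/
theorem integral_integral_window_le (hq : Continuous q) (hq0 : ∀ s ∈ Icc 0 R, 0 ≤ q s)
    {x y α β : ℝ} (hαβ : α ≤ β) (hxy : x ≤ y) (hx : 0 ≤ x + α) (hy : y + β ≤ R) :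
    ∫ t in x..y, (∫ s in t + α..t + β, q s) ≤ (β - α) * ∫ s in 0..R, q s := by
  set G : ℝ → ℝ := fun u => ∫ s in 0..u, q s
  have hG : Continuous G := continuous_primitive (fun _ _ => hq.intervalIntegrable _ _) 0
  have hwindow (t : ℝ) : ∫ s in t + α..t + β, q s = G (t + β) - G (t + α) :=
    (integral_interval_sub_left (hq.intervalIntegrable _ _) (hq.intervalIntegrable _ _)).symm
  simp_rw [hwindow]
  rw [intervalIntegral.integral_sub (Continuous.intervalIntegrable (by fun_prop) _ _)
      (Continuous.intervalIntegrable (by fun_prop) _ _),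
    intervalIntegral.integral_comp_add_right G, intervalIntegral.integral_comp_add_right G,
    integral_interval_sub_interval_comm' (hG.intervalIntegrable _ _) (hG.intervalIntegrable _ _)
      (hG.intervalIntegrable _ _)]
  have hupper : ∫ u in y + α..y + β, G u ≤ (β - α) * ∫ s in 0..R, q s := by
    have := integral_mono_on (μ := volume) (f := G) (g := fun _ => ∫ s in 0..R, q s)
      (show y + α ≤ y + β by linarith) (hG.intervalIntegrable _ _) intervalIntegrable_const
      fun u hu => integral_le_integral_of_subinterval hq hq0 le_rfl (by linarith [hu.1])
        (by linarith [hu.2])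
    rwa [intervalIntegral.integral_const, smul_eq_mul, add_sub_add_left_eq_sub] at this
  have hlower : 0 ≤ ∫ u in x + α..x + β, G u :=
    integral_nonneg (by linarith) fun u hu =>
      integral_nonneg (by linarith [hu.1]) fun s hs =>
        hq0 s ⟨hs.1, by linarith [hs.2, hu.2]⟩
  linarith

end NonnegOnIcc

theorem sq_mul_integral_weighted_sq_deriv_le {f : ℝ → ℝ} (hf : ContDiff ℝ 2 f)
    {R ℓ c x y α : ℝ} (hc : 0 ≤ c) (hα : α ≤ 0) (hαℓ : -ℓ ≤ α) (hxy : x ≤ y) (hx : 0 ≤ x + α)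
    (hy : y + (α + ℓ) ≤ R) (hweight : ∀ t ∈ Icc x y, t ≤ c * (t + α)) :
    ℓ ^ 2 * ∫ t in x..y, deriv f t ^ 2 * t
      ≤ 3 * (c + 1) * (∫ s in 0..R, f s ^ 2 * s)
        + 3 * c * ℓ ^ 4 * ∫ s in 0..R, deriv (deriv f) s ^ 2 * s := by
  set p : ℝ → ℝ := fun s => f s ^ 2 * s
  set q : ℝ → ℝ := fun s => deriv (deriv f) s ^ 2 * s
  have hf' : Continuous (deriv f) := hf.continuous_deriv one_le_two
  have hf'' : Continuous (deriv (deriv f)) := hf.deriv'.continuous_deriv le_rfl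
  have hp : Continuous p := by fun_prop
  have hq : Continuous q := by fun_prop
  have hp0 : ∀ s ∈ Icc 0 R, 0 ≤ p s := fun s hs => mul_nonneg (sq_nonneg _) hs.1
  have hq0 : ∀ s ∈ Icc 0 R, 0 ≤ q s := fun s hs => mul_nonneg (sq_nonneg _) hs.1
  have hpointwise : ∀ t ∈ Icc x y, ℓ ^ 2 * (deriv f t ^ 2 * t)
      ≤ 3 * c * p (t + α) + 3 * p (t + (α + ℓ))
        + 3 * c * ℓ ^ 3 * ∫ s in t + α..t + (α + ℓ), q s := by
    intro t ht
    rw [← add_assoc]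
    exact sq_mul_weighted_sq_deriv_le hf hc (by linarith [ht.1]) ⟨by linarith, by linarith⟩
      (hweight t ht)
  have hW := continuous_integral_window hq α (α + ℓ)
  calc ℓ ^ 2 * ∫ t in x..y, deriv f t ^ 2 * t = ∫ t in x..y, ℓ ^ 2 * (deriv f t ^ 2 * t) :=
        (intervalIntegral.integral_const_mul _ _).symm
    _ ≤ ∫ t in x..y, (3 * c * p (t + α) + 3 * p (t + (α + ℓ))
          + 3 * c * ℓ ^ 3 * ∫ s in t + α..t + (α + ℓ), q s) :=
        integral_mono_on hxy (Continuous.intervalIntegrable (by fun_prop) _ _)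
          (Continuous.intervalIntegrable (by fun_prop) _ _) hpointwise
    _ = 3 * c * (∫ t in x..y, p (t + α)) + 3 * (∫ t in x..y, p (t + (α + ℓ)))
          + 3 * c * ℓ ^ 3 * ∫ t in x..y, ∫ s in t + α..t + (α + ℓ), q s := by
        rw [intervalIntegral.integral_add, intervalIntegral.integral_add,
          intervalIntegral.integral_const_mul, intervalIntegral.integral_const_mul,
          intervalIntegral.integral_const_mul]
        all_goals exact Continuous.intervalIntegrable (by fun_prop) _ _
    _ ≤ 3 * c * (∫ s in 0..R, p s) + 3 * (∫ s in 0..R, p s)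
          + 3 * c * ℓ ^ 3 * (((α + ℓ) - α) * ∫ s in 0..R, q s) := by
        have hcoef : 0 ≤ 3 * c * ℓ ^ 3 := mul_nonneg (by positivity) (pow_nonneg (by linarith) 3)
        have hleft := integral_comp_add_right_le hp hp0 hx hxy (by linarith)
        have hright := integral_comp_add_right_le hp hp0 (by linarith) hxy hy
        have hwindow := integral_integral_window_le hq hq0 (by linarith) hxy hx hy
        gcongr
    _ = _ := by ring

theorem integral_weighted_sq_deriv_le {f : ℝ → ℝ} (hf : ContDiff ℝ 2 f) {R ℓ : ℝ}
    (hℓ : 0 < ℓ) (hR : 3 * ℓ ≤ R) :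
    ∫ t in 0..R, deriv f t ^ 2 * t
      ≤ 18 * (∫ s in 0..R, f s ^ 2 * s) / ℓ ^ 2
        + 12 * (∫ s in 0..R, deriv (deriv f) s ^ 2 * s) * ℓ ^ 2 := by
  -- near `R` the windows `[t - ℓ, t]` are used, and `t ≥ 2ℓ` there gives `t ≤ 3 (t - ℓ)`
  have hforward := sq_mul_integral_weighted_sq_deriv_le hf (R := R) (ℓ := ℓ) (c := 1)
    (x := 0) (y := R - ℓ) (α := 0) zero_le_one le_rfl (by linarith) (by linarith) (by linarith)
    (by linarith) fun t _ => by linarith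
  have hbackward := sq_mul_integral_weighted_sq_deriv_le hf (R := R) (ℓ := ℓ) (c := 3)
    (x := R - ℓ) (y := R) (α := -ℓ) zero_le_three (neg_nonpos.2 hℓ.le) le_rfl (by linarith)
    (by linarith) (by linarith) fun t ht => by linarith [ht.1]
  have hf' : Continuous (deriv f) := hf.continuous_deriv one_le_two
  rw [← integral_add_adjacent_intervals (b := R - ℓ)
      (Continuous.intervalIntegrable (by fun_prop) _ _)
      (Continuous.intervalIntegrable (by fun_prop) _ _),
    div_add' _ _ _ (by positivity), le_div_iff₀ (by positivity)]
  linear_combination hforward + hbackward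

theorem le_mul_sqrt_mul_sqrt_add_of_forall_le {A B D a d L : ℝ} (hA : 0 ≤ A) (hD : 0 ≤ D)
    (ha : 0 ≤ a) (hd : 0 ≤ d) (hL : 0 < L)
    (hB : ∀ ℓ, 0 < ℓ → ℓ ≤ L → B ≤ a * A / ℓ ^ 2 + d * D * ℓ ^ 2) :
    B ≤ (a + d) * √A * √D + (a + d) / L ^ 2 * A := by
  obtain ⟨s, hs, rfl⟩ : ∃ s, 0 ≤ s ∧ A = s ^ 2 :=
    ⟨√A, Real.sqrt_nonneg A, (Real.sq_sqrt hA).symm⟩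
  obtain ⟨u, hu, rfl⟩ : ∃ u, 0 ≤ u ∧ D = u ^ 2 :=
    ⟨√D, Real.sqrt_nonneg D, (Real.sq_sqrt hD).symm⟩
  rw [Real.sqrt_sq hs, Real.sqrt_sq hu]
  have hmixed : 0 ≤ (a + d) * s * u := by positivity
  have hlocal : 0 ≤ (a + d) / L ^ 2 * s ^ 2 := by positivity
  rcases lt_or_ge (L ^ 2 * u) s with hlarge | hsmall
  · have hdL : d * u ^ 2 * L ^ 2 ≤ d * s ^ 2 / L ^ 2 := by
      rw [le_div_iff₀ (by positivity)]
      nlinarith [mul_le_mul_of_nonneg_left (pow_le_pow_left₀ (by positivity) hlarge.le 2) hd]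
    calc B ≤ a * s ^ 2 / L ^ 2 + d * u ^ 2 * L ^ 2 := hB L hL le_rfl
      _ ≤ (a + d) / L ^ 2 * s ^ 2 := by rw [div_mul_eq_mul_div, add_mul, add_div]; linarith
      _ ≤ _ := by linarith
  rcases hs.eq_or_lt with rfl | hspos
  · -- with `A = 0` the bound holds for arbitrarily small `ℓ`
    have hB0 : B ≤ 0 := by
      refine ge_of_tendsto (f := fun ℓ : ℝ => d * u ^ 2 * ℓ ^ 2) (x := 𝓝[>] 0) ?_ ?_
      · exact ((by fun_prop : Continuous fun ℓ : ℝ => d * u ^ 2 * ℓ ^ 2).tendsto' 0 0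
          (by simp)).mono_left nhdsWithin_le_nhds
      · filter_upwards [Ioc_mem_nhdsGT hL] with ℓ hℓ
        simpa using hB ℓ hℓ.1 hℓ.2
    linarith
  · have hupos : 0 < u := pos_of_mul_pos_right (hspos.trans_le hsmall) (by positivity)
    -- the balancing choice `ℓ⁴ = A / D`
    set ℓ := √(s / u)
    have hℓ2 : ℓ ^ 2 = s / u := Real.sq_sqrt (by positivity)
    have hℓL : ℓ ≤ L := by
      rw [← Real.sqrt_sq hL.le]
      exact Real.sqrt_le_sqrt ((div_le_iff₀ hupos).2 hsmall)
    calc B ≤ a * s ^ 2 / ℓ ^ 2 + d * u ^ 2 * ℓ ^ 2 :=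
          hB ℓ (Real.sqrt_pos.2 (by positivity)) hℓL
      _ = (a + d) * s * u := by rw [hℓ2]; field_simp
      _ ≤ _ := by linarith

/-- weighted Gagliardo–Nirenberg interpolation inequality on `(0, r₀)`
with weight `r dr`: `∫ |w'|² r ≤ C (∫ |w|² r)^(1/2) (∫ |w''|² r)^(1/2) + (C/r₀²) ∫ |w|² r`. -/
theorem weighted_interpolation (r0 : ℝ) (hr0 : 0 < r0) :
    ∃ C : ℝ, 0 < C ∧ ∀ w : ℝ → ℝ, ContDiff ℝ 2 w →
      ∫ r in (0:ℝ)..r0, (deriv w r) ^ 2 * r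
        ≤ C * Real.sqrt (∫ r in (0:ℝ)..r0, (w r) ^ 2 * r)
              * Real.sqrt (∫ r in (0:ℝ)..r0, (deriv (deriv w) r) ^ 2 * r)
          + (C / r0 ^ 2) * ∫ r in (0:ℝ)..r0, (w r) ^ 2 * r := by
  refine ⟨270, by norm_num, fun w hw => ?_⟩
  have hweighted_nonneg (g : ℝ → ℝ) : 0 ≤ ∫ r in (0:ℝ)..r0, g r ^ 2 * r :=
    integral_nonneg hr0.le fun r hr => mul_nonneg (sq_nonneg _) hr.1
  have hbound := le_mul_sqrt_mul_sqrt_add_of_forall_le (hweighted_nonneg w)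
    (hweighted_nonneg (deriv (deriv w))) (by norm_num : (0:ℝ) ≤ 18) (by norm_num : (0:ℝ) ≤ 12)
    (by positivity : 0 < r0 / 3)
    fun ℓ hℓ hℓL => integral_weighted_sq_deriv_le hw hℓ (by linarith)
  have hconst : (18 + 12 : ℝ) / (r0 / 3) ^ 2 = 270 / r0 ^ 2 := by field_simp; norm_num
  rw [hconst] at hbound
  refine hbound.trans (add_le_add_left ?_ _)
  gcongr
  norm_num
end

section
/- Let μ > 0 and define W_rel'' (η) = 2 for η > -2μ and W_rel''(η) = 0 for η < -2μ. Then for all real numbers s, t, one has ((s ∨ (-2μ)) - (t ∨ (-2μ)))² ≤ (s - t) · ∫_t^s W_rel''(η) dη, where a ∨ b = max(a,b) and the integral is the signed integral from t to s. -/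
open intervalIntegral

lemma Wpp_eq_indicator (c : ℝ) :
    (fun η : ℝ => if c < η then (2:ℝ) else 0) =
      Set.indicator (Set.Ioi c) (fun _ => (2:ℝ)) := by
  funext η
  by_cases h : c < η
  · simp [Set.indicator_of_mem, h, Set.mem_Ioi]
  · simp [Set.indicator_of_notMem, h, Set.mem_Ioi]

lemma Wpp_intervalIntegrable (c a b : ℝ) :
    IntervalIntegrable (fun η : ℝ => if c < η then (2:ℝ) else 0) MeasureTheory.volume a b := by
  rw [Wpp_eq_indicator]
  exact ⟨(_root_.intervalIntegrable_const (c := (2:ℝ)) (a := a) (b := b)).1.indicator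
      measurableSet_Ioi,
    (_root_.intervalIntegrable_const (c := (2:ℝ)) (a := a) (b := b)).2.indicator
      measurableSet_Ioi⟩

lemma Wpp_integral (c t s : ℝ) (hts : t ≤ s) :
    ∫ η in t..s, (if c < η then (2:ℝ) else 0) = 2 * (max s c - max t c) := by
  rcases le_total s c with hsc | hcs
  · -- s ≤ c : integrand vanishes a.e. on (t, s]
    rw [max_eq_right hsc, max_eq_right (hts.trans hsc), sub_self, mul_zero]
    apply intervalIntegral.integral_zero_ae
    filter_upwards with η hη
    rw [Set.uIoc_of_le hts] at hη
    rw [if_neg (not_lt.2 ((hη.2.trans hsc)))]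
  · rcases le_total c t with hct | htc
    · -- c ≤ t : integrand equals 2 a.e. on (t, s]
      rw [max_eq_left hcs, max_eq_left hct]
      have : ∫ η in t..s, (if c < η then (2:ℝ) else 0) = ∫ _ in t..s, (2:ℝ) := by
        apply intervalIntegral.integral_congr_ae
        filter_upwards with η hη
        rw [Set.uIoc_of_le hts] at hη
        rw [if_pos (lt_of_le_of_lt hct hη.1)]
      rw [this, intervalIntegral.integral_const, smul_eq_mul, mul_comm]
    · -- t ≤ c ≤ s : split at c
      rw [max_eq_left hcs, max_eq_right htc]
      have hadd := intervalIntegral.integral_add_adjacent_intervals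
        (Wpp_intervalIntegrable c t c) (Wpp_intervalIntegrable c c s)
      have h1 : ∫ η in t..c, (if c < η then (2:ℝ) else 0) = 0 := by
        apply intervalIntegral.integral_zero_ae
        filter_upwards with η hη
        rw [Set.uIoc_of_le htc] at hη
        rw [if_neg (not_lt.2 hη.2)]
      have h2 : ∫ η in c..s, (if c < η then (2:ℝ) else 0) = 2 * (s - c) := by
        have : ∫ η in c..s, (if c < η then (2:ℝ) else 0) = ∫ _ in c..s, (2:ℝ) := by
          apply intervalIntegral.integral_congr_ae
          filter_upwards with η hη
          rw [Set.uIoc_of_le hcs] at hη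
          rw [if_pos hη.1]
        rw [this, intervalIntegral.integral_const, smul_eq_mul, mul_comm]
      rw [← hadd, h1, h2, zero_add]

lemma key_ineq (c t s : ℝ) (hts : t ≤ s) :
    (max s c - max t c) ^ 2 ≤ (s - t) * (2 * (max s c - max t c)) := by
  set M := max s c - max t c with hM
  have hM0 : 0 ≤ M := by
    have := max_le_max hts (le_refl c)
    linarith [this]
  have hMst : M ≤ s - t := by
    rcases le_total s c with hsc | hcs
    · have : M = 0 := by
        rw [hM, max_eq_right hsc, max_eq_right (hts.trans hsc), sub_self]
      linarith
    · rcases le_total c t with hct | htc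
      · have : M = s - t := by rw [hM, max_eq_left hcs, max_eq_left hct]
        linarith
      · have : M = s - c := by rw [hM, max_eq_left hcs, max_eq_right htc]
        nlinarith
  nlinarith

/-- with `W_rel''(η) = 2` for `η > -2μ` and `0` for `η < -2μ`, one has
`((s ∨ -2μ) - (t ∨ -2μ))² ≤ (s - t) · ∫_t^s W_rel''(η) dη` for all reals `s, t`. -/
theorem truncation_taylor_remainder (μ : ℝ) (hμ : 0 < μ)
    (W'' : ℝ → ℝ) (hW'' : ∀ η : ℝ, W'' η = if -2 * μ < η then (2:ℝ) else 0) :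
    ∀ s t : ℝ,
      (max s (-2 * μ) - max t (-2 * μ)) ^ 2 ≤ (s - t) * ∫ η in t..s, W'' η := by
  intro s t
  set c := -2 * μ with hc
  have hWfun : W'' = fun η => if c < η then (2:ℝ) else 0 := funext hW''
  rw [hWfun]
  rcases le_total t s with hts | hst
  · rw [Wpp_integral c t s hts]
    exact key_ineq c t s hts
  · rw [intervalIntegral.integral_symm, Wpp_integral c s t hst]
    have := key_ineq c s t hst
    nlinarith [this]
end
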